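/- arXiv:1706.09040 — 5 statements merged into one kernel-verified Lean document; each statement's English description precedes it below -/
import Mathlib

section
/- Let φ, f : I → ℝ be functions such that φ is constant on the set ½(Z_f^c + I) = {(u+v)/2 : u ∈ Z_f^c, v ∈ I}. Then the pair (φ, f) solves the functional equation φ((x+y)/2)(f(x)+f(y)) = φ(x)f(x) + φ(y)f(y) for all x, y ∈ I. -/
/-! At a point `x` with `f x ≠ 0`, taking `u = v = x` shows `φ x = c`, so `φ x * f x = c * f x`
everywhere on `I`; and if `f x` or `f y` is nonzero then `(x + y) / 2` lies in `½(Z_f^c + I)`,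
so the left-hand side is `c * (f x + f y)` too. -/

theorem mul_eq_const_mul_of_ne_zero {α M : Type*} [MulZeroClass M] {φ f : α → M} {c : M} {x : α}
    (h : f x ≠ 0 → φ x = c) : φ x * f x = c * f x := by
  by_cases hfx : f x = 0
  · simp [hfx]
  · rw [h hfx]

theorem stmt0_general (I : Set ℝ) (φ f : ℝ → ℝ)
    (hconst : ∃ c : ℝ, ∀ u ∈ I \ {x ∈ I | f x = 0}, ∀ v ∈ I, φ ((u + v) / 2) = c) :
    ∀ x ∈ I, ∀ y ∈ I,
      φ ((x + y) / 2) * (f x + f y) = φ x * f x + φ y * f y := by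
  obtain ⟨c, hc⟩ := hconst
  have hmid : ∀ x ∈ I, f x ≠ 0 → ∀ y ∈ I, φ ((x + y) / 2) = c :=
    fun x hx hfx y hy => hc x ⟨hx, fun h => hfx h.2⟩ y hy
  have hself : ∀ x ∈ I, φ x * f x = c * f x := fun x hx =>
    mul_eq_const_mul_of_ne_zero fun hfx => by simpa using hmid x hx hfx x hx
  intro x hx y hy
  rw [hself x hx, hself y hy, ← mul_add]
  by_cases hfx : f x = 0
  · by_cases hfy : f y = 0
    · simp [hfx, hfy]
    · rw [add_comm x y, hmid y hy hfy x hx]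
  · rw [hmid x hx hfx y hy]

/-- Let `φ, f : I → ℝ` be functions such that `φ` is constant on the set
`½(Z_f^c + I) = {(u+v)/2 : u ∈ Z_f^c, v ∈ I}`, where `Z_f^c = I \ Z_f` and
`Z_f = {x ∈ I | f x = 0}`.  Then `(φ, f)` solves the functional equation
`φ((x+y)/2)(f(x)+f(y)) = φ(x)f(x) + φ(y)f(y)` for all `x, y ∈ I`. -/
theorem stmt0 (I : Set ℝ) (hIopen : IsOpen I) (hIconn : I.OrdConnected)
    (hIne : I.Nonempty) (φ f : ℝ → ℝ)
    (hconst : ∃ c : ℝ, ∀ u ∈ I \ {x ∈ I | f x = 0}, ∀ v ∈ I, φ ((u + v) / 2) = c) :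
    ∀ x ∈ I, ∀ y ∈ I,
      φ ((x + y) / 2) * (f x + f y) = φ x * f x + φ y * f y :=
  stmt0_general I φ f hconst
end

section
/- Let A, B ⊆ I be subsets such that A ⊆ B ⊆ cl(conv(A)), where conv(A) is the convex hull of A and cl denotes closure. Then A + I = B + I. -/
/-!
Every point of `conv A` lies between two points `a ≤ b` of `A`, and if `x ∈ [a, b]` and `t ∈ I`
then `x + t = a + (x + t - a) = b + (x + t - b)` where one of the two shifts lies in `I` because
`I` is an interval containing `a`, `b` and `t`; hence `conv A + I = A + I`. Since `I` is open,
`cl S + I = S + I` for any `S`, so `B + I ⊆ cl (conv A) + I = A + I ⊆ B + I`.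
-/

open Pointwise Set

lemma exists_le_le_of_mem_convexHull {𝕜 E : Type*} [Semiring 𝕜] [PartialOrder 𝕜]
    [AddCommMonoid E] [LinearOrder E] [IsOrderedAddMonoid E] [Module 𝕜 E] [PosSMulMono 𝕜 E]
    {s : Set E} {x : E} (hx : x ∈ convexHull 𝕜 s) :
    ∃ a ∈ s, ∃ b ∈ s, a ≤ x ∧ x ≤ b := by
  have hconn : OrdConnected {x : E | ∃ a ∈ s, ∃ b ∈ s, a ≤ x ∧ x ≤ b} := by
    constructor
    rintro u ⟨a, ha, -, -, hau, -⟩ v ⟨-, -, b, hb, -, hvb⟩ z ⟨huz, hzv⟩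
    exact ⟨a, ha, b, hb, hau.trans huz, hzv.trans hvb⟩
  refine convexHull_min ?_ hconn.convex hx
  exact fun a ha ↦ ⟨a, ha, a, ha, le_rfl, le_rfl⟩

lemma Set.OrdConnected.add_mem_add_of_mem_Icc {G : Type*} [AddCommGroup G] [LinearOrder G]
    [IsOrderedAddMonoid G] {I A : Set G} (hI : I.OrdConnected) (hAI : A ⊆ I) {a b x t : G}
    (ha : a ∈ A) (hb : b ∈ A) (hx : x ∈ Icc a b) (ht : t ∈ I) : x + t ∈ A + I := by
  rcases le_total (x + t - a) b with hle | hge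
  · have hshift : x + t - a ∈ I :=
      hI.out ht (hAI hb) ⟨le_sub_iff_add_le'.2 (add_le_add_left hx.1 t), hle⟩
    exact ⟨a, ha, x + t - a, hshift, add_sub_cancel a (x + t)⟩
  · have hshift : x + t - b ∈ I :=
      hI.out (hAI ha) ht ⟨le_sub_comm.1 hge, sub_le_iff_le_add'.2 (add_le_add_left hx.2 t)⟩
    exact ⟨b, hb, x + t - b, hshift, add_sub_cancel b (x + t)⟩

lemma Set.OrdConnected.convexHull_add_eq {𝕜 E : Type*} [Semiring 𝕜] [PartialOrder 𝕜]
    [AddCommGroup E] [LinearOrder E] [IsOrderedAddMonoid E] [Module 𝕜 E] [PosSMulMono 𝕜 E]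
    {I A : Set E} (hI : I.OrdConnected) (hAI : A ⊆ I) : convexHull 𝕜 A + I = A + I := by
  refine (add_subset_iff.2 fun x hx t ht ↦ ?_).antisymm
    (add_subset_add_right (subset_convexHull 𝕜 A))
  obtain ⟨a, ha, b, hb, hax, hxb⟩ := exists_le_le_of_mem_convexHull hx
  exact hI.add_mem_add_of_mem_Icc hAI ha hb ⟨hax, hxb⟩ ht

theorem stmt2_general (I : Set ℝ) (hIopen : IsOpen I) (hIconn : I.OrdConnected)
    (A B : Set ℝ) (hAI : A ⊆ I)
    (hAB : A ⊆ B) (hBconv : B ⊆ closure (convexHull ℝ A)) :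
    A + I = B + I := by
  refine (add_subset_add_right hAB).antisymm ?_
  calc B + I ⊆ closure (convexHull ℝ A) + I := add_subset_add_right hBconv
    _ = A + I := by rw [hIopen.closure_add, hIconn.convexHull_add_eq hAI]

/-- Let `A, B ⊆ I` be subsets of the nonempty open interval `I` such that
`A ⊆ B ⊆ cl(conv(A))`.  Then `A + I = B + I`. -/
theorem stmt2 (I : Set ℝ) (hIopen : IsOpen I) (hIconn : I.OrdConnected)
    (hIne : I.Nonempty) (A B : Set ℝ) (hAI : A ⊆ I) (hBI : B ⊆ I)
    (hAB : A ⊆ B) (hBconv : B ⊆ closure (convexHull ℝ A)) :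
    A + I = B + I :=
  stmt2_general I hIopen hIconn A B hAI hAB hBconv
end

section
/- If a pair of functions φ, f : I → ℝ solves the functional equation φ((x+y)/2)(f(x)+f(y)) = φ(x)f(x) + φ(y)f(y) for all x, y ∈ I, and φ is continuous on I, then for every x in the closure of Z_f relative to I and every y ∈ Z_f^c one has φ(y) = φ((x+y)/2). -/
/-!
Fix `y ∈ I` with `f y ≠ 0`. Putting a zero `z` of `f` into the equation leaves
`φ((z+y)/2) f(y) = φ(y) f(y)`, so `z ↦ φ((z+y)/2)` equals `φ(y)` on `Z_f`; being continuous,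
it keeps this value on the closure of `Z_f`.
-/

theorem Set.OrdConnected.add_div_two_mem {s : Set ℝ} (hs : s.OrdConnected) {x y : ℝ}
    (hx : x ∈ s) (hy : y ∈ s) : (x + y) / 2 ∈ s :=
  hs.uIcc_subset hx hy ⟨by rw [le_div_iff₀ two_pos]; linarith [min_le_left x y, min_le_right x y],
    by rw [div_le_iff₀ two_pos]; linarith [le_max_left x y, le_max_right x y]⟩

theorem phi_add_div_two_eq_of_eq_zero {I : Set ℝ} {φ f : ℝ → ℝ}
    (heq : ∀ x ∈ I, ∀ y ∈ I, φ ((x + y) / 2) * (f x + f y) = φ x * f x + φ y * f y)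
    {z y : ℝ} (hz : z ∈ I) (hfz : f z = 0) (hy : y ∈ I) (hfy : f y ≠ 0) :
    φ ((z + y) / 2) = φ y := by
  have h := heq z hz y hy
  rw [hfz, zero_add, mul_zero, zero_add] at h
  exact mul_right_cancel₀ hfy h

theorem stmt4_general (I : Set ℝ) (hIconn : I.OrdConnected)
    (φ f : ℝ → ℝ)
    (heq : ∀ x ∈ I, ∀ y ∈ I,
      φ ((x + y) / 2) * (f x + f y) = φ x * f x + φ y * f y)
    (hφ : ContinuousOn φ I) :
    ∀ x ∈ closure {z ∈ I | f z = 0} ∩ I, ∀ y ∈ I, f y ≠ 0 →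
      φ y = φ ((x + y) / 2) := by
  rintro x ⟨hxcl, hxI⟩ y hyI hfy
  have hcont : ContinuousWithinAt (fun z => φ ((z + y) / 2)) {z ∈ I | f z = 0} x :=
    (hφ _ (hIconn.add_div_two_mem hxI hyI)).comp (f := fun z => (z + y) / 2)
      (by fun_prop) fun z hz => hIconn.add_div_two_mem hz.1 hyI
  have hconst : Set.MapsTo (fun z => φ ((z + y) / 2)) {z ∈ I | f z = 0} {φ y} :=
    fun z hz => phi_add_div_two_eq_of_eq_zero heq hz.1 hz.2 hyI hfy
  simpa only [closure_singleton, Set.mem_singleton_iff, eq_comm] using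
    hcont.mem_closure hxcl hconst

/-- If a pair of functions `φ, f : I → ℝ` solves the functional equation
`φ((x+y)/2)(f(x)+f(y)) = φ(x)f(x) + φ(y)f(y)` for all `x, y ∈ I`, and `φ` is continuous
on `I`, then for every `x` in the closure of `Z_f` relative to `I` and every `y ∈ Z_f^c`
one has `φ(y) = φ((x+y)/2)`. -/
theorem stmt4 (I : Set ℝ) (hIopen : IsOpen I) (hIconn : I.OrdConnected)
    (hIne : I.Nonempty) (φ f : ℝ → ℝ)
    (heq : ∀ x ∈ I, ∀ y ∈ I,
      φ ((x + y) / 2) * (f x + f y) = φ x * f x + φ y * f y)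
    (hφ : ContinuousOn φ I) :
    ∀ x ∈ closure {z ∈ I | f z = 0} ∩ I, ∀ y ∈ I, f y ≠ 0 →
      φ y = φ ((x + y) / 2) :=
  stmt4_general I hIconn φ f heq hφ
end

section
/- Suppose the pair of functions φ, f : I → ℝ solves the functional equation φ((x+y)/2)(f(x)+f(y)) = φ(x)f(x) + φ(y)f(y) for all x, y ∈ I, φ is continuous on I, f is nowhere zero on I, and φ is not constant on I. Then φ is not constant on any nonempty open subinterval of I. -/
/-!
If `φ = c` at `x` and at the midpoint of `x` and `y`, the equation at `(x, y)` collapses to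
`(φ y - c) f y = 0`, so `φ y = c`. Taking `x` and the midpoint at `1/3` and `2/3` of the way
from the centre `m` of a ball on which `φ = c` to a point `y` of `I` at distance `< 3s/2` shows
that the radius of constancy can be multiplied by `3/2`; convexity of `I` keeps every point
involved in `I`. Iterating, `φ = c` on all of `I`.
-/

open Metric Set

def SolvesMidpointEq (I : Set ℝ) (φ f : ℝ → ℝ) : Prop :=
  ∀ x ∈ I, ∀ y ∈ I, φ ((x + y) / 2) * (f x + f y) = φ x * f x + φ y * f y

namespace SolvesMidpointEq

variable {I : Set ℝ} {φ f : ℝ → ℝ} {c m s : ℝ}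

theorem eq_of_eq_of_midpoint_eq (h : SolvesMidpointEq I φ f) {x y : ℝ} (hx : x ∈ I)
    (hy : y ∈ I) (hfy : f y ≠ 0) (hφx : φ x = c) (hφm : φ ((x + y) / 2) = c) : φ y = c := by
  have key := h x hx y hy
  rw [hφx, hφm] at key
  have : (φ y - c) * f y = 0 := by linarith
  exact sub_eq_zero.mp ((mul_eq_zero.mp this).resolve_right hfy)

theorem eqOn_inter_ball_three_halves_mul (h : SolvesMidpointEq I φ f) (hI : I.OrdConnected)
    (hf : ∀ x ∈ I, f x ≠ 0) (hm : m ∈ I) (hc : EqOn φ (Function.const ℝ c) (I ∩ ball m s)) :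
    EqOn φ (Function.const ℝ c) (I ∩ ball m (3 / 2 * s)) := by
  rintro y ⟨hy, hyd⟩
  rw [mem_ball, Real.dist_eq] at hyd
  have hconv : Convex ℝ I := hI.convex
  have along (t : ℝ) (ht0 : 0 ≤ t) (ht1 : t ≤ 1) (hts : t * |y - m| < s) :
      m + t * (y - m) ∈ I ∩ ball m s := by
    refine ⟨hconv.add_smul_sub_mem hm hy ⟨ht0, ht1⟩, ?_⟩
    rwa [mem_ball, Real.dist_eq, add_sub_cancel_left, abs_mul, abs_of_nonneg ht0]
  have hx := along (1 / 3) (by norm_num) (by norm_num) (by linarith [abs_nonneg (y - m)])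
  have hmid := along (2 / 3) (by norm_num) (by norm_num) (by linarith)
  refine h.eq_of_eq_of_midpoint_eq hx.1 hy (hf y hy) (hc hx) ?_
  rw [show (m + 1 / 3 * (y - m) + y) / 2 = m + 2 / 3 * (y - m) by ring]
  exact hc hmid

theorem eqOn_of_eqOn_inter_ball (h : SolvesMidpointEq I φ f) (hI : I.OrdConnected)
    (hf : ∀ x ∈ I, f x ≠ 0) (hm : m ∈ I) (hs : 0 < s)
    (hc : EqOn φ (Function.const ℝ c) (I ∩ ball m s)) : EqOn φ (Function.const ℝ c) I := by
  have grow (n : ℕ) : EqOn φ (Function.const ℝ c) (I ∩ ball m ((3 / 2) ^ n * s)) := by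
    induction n with
    | zero => simpa using hc
    | succ n ih =>
      rw [pow_succ, mul_comm _ (3 / 2 : ℝ), mul_assoc]
      exact h.eqOn_inter_ball_three_halves_mul hI hf hm ih
  intro y hy
  obtain ⟨n, hn⟩ := pow_unbounded_of_one_lt (dist y m / s) (by norm_num : (1 : ℝ) < 3 / 2)
  exact grow n ⟨hy, (div_lt_iff₀ hs).mp hn⟩

end SolvesMidpointEq

theorem stmt7_general (I : Set ℝ) (hIconn : I.OrdConnected)
    (φ f : ℝ → ℝ)
    (heq : ∀ x ∈ I, ∀ y ∈ I,
      φ ((x + y) / 2) * (f x + f y) = φ x * f x + φ y * f y)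
    (hf : ∀ x ∈ I, f x ≠ 0)
    (hnc : ¬ ∃ c : ℝ, ∀ x ∈ I, φ x = c) :
    ∀ a b : ℝ, a < b → Set.Ioo a b ⊆ I →
      ¬ ∃ c : ℝ, ∀ x ∈ Set.Ioo a b, φ x = c := by
  rintro a b hab hsub ⟨c, hc⟩
  have hball : ball ((a + b) / 2) ((b - a) / 2) = Ioo a b := by
    rw [Real.ball_eq_Ioo]
    congr 1 <;> ring
  have hmid : (a + b) / 2 ∈ I := hsub ⟨by linarith, by linarith⟩
  have hconst : EqOn φ (Function.const ℝ c) (I ∩ ball ((a + b) / 2) ((b - a) / 2)) := by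
    rw [hball]
    exact fun x hx => hc x hx.2
  exact hnc ⟨c, SolvesMidpointEq.eqOn_of_eqOn_inter_ball heq hIconn hf hmid
    (by linarith) hconst⟩

/-- Suppose the pair of functions `φ, f : I → ℝ` solves the functional
equation `φ((x+y)/2)(f(x)+f(y)) = φ(x)f(x) + φ(y)f(y)` for all `x, y ∈ I`, `φ` is continuous
on `I`, `f` is nowhere zero on `I`, and `φ` is not constant on `I`.  Then `φ` is not constant
on any nonempty open subinterval of `I`. -/
theorem stmt7 (I : Set ℝ) (hIopen : IsOpen I) (hIconn : I.OrdConnected)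
    (hIne : I.Nonempty) (φ f : ℝ → ℝ)
    (heq : ∀ x ∈ I, ∀ y ∈ I,
      φ ((x + y) / 2) * (f x + f y) = φ x * f x + φ y * f y)
    (hφ : ContinuousOn φ I)
    (hf : ∀ x ∈ I, f x ≠ 0)
    (hnc : ¬ ∃ c : ℝ, ∀ x ∈ I, φ x = c) :
    ∀ a b : ℝ, a < b → Set.Ioo a b ⊆ I →
      ¬ ∃ c : ℝ, ∀ x ∈ Set.Ioo a b, φ x = c :=
  stmt7_general I hIconn φ f heq hf hnc
end

section
/- Let J ⊆ ℝ be a nonempty open interval, h : J → ℝ a continuous strictly monotone function, and set I := 2h(J), ℓ(x) := g(h⁻¹(x/2)) for x ∈ I, and G₀ := G − G(0). If (g, h, F, G, H) solves G(g(u)−g(v)) = H(h(u)+h(v)) + F(u) + F(v) for all u, v ∈ J, then the functions ℓ, H : I → ℝ and G₀ : ℓ(I)−ℓ(I) → ℝ solve G₀(ℓ(x)−ℓ(y)) = H((x+y)/2) − (H(x)+H(y))/2 for all x, y ∈ I, and moreover F(u) = ½(G(0) − H(2h(u))) for all u ∈ J. -/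
section FunctionalEquation

variable {J : Set ℝ} {g h F G H : ℝ → ℝ}
  (heq : ∀ u ∈ J, ∀ v ∈ J, G (g u - g v) = H (h u + h v) + F u + F v)
include heq

theorem F_eq_of_funEq {u : ℝ} (hu : u ∈ J) : F u = (G 0 - H (2 * h u)) / 2 := by
  have hdiag := heq u hu u hu
  rw [sub_self, ← two_mul] at hdiag
  linarith

theorem G_sub_G_zero_eq_of_funEq {u v : ℝ} (hu : u ∈ J) (hv : v ∈ J) :
    G (g u - g v) - G 0 = H (h u + h v) - (H (2 * h u) + H (2 * h v)) / 2 := by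
  rw [heq u hu v hv, F_eq_of_funEq heq hu, F_eq_of_funEq heq hv]
  ring

end FunctionalEquation

theorem stmt16_general (J : Set ℝ) (g h F G H : ℝ → ℝ)
    (hinv : ℝ → ℝ)
    (hinv_left : ∀ u ∈ J, hinv (h u) = u)
    (heq : ∀ u ∈ J, ∀ v ∈ J, G (g u - g v) = H (h u + h v) + F u + F v) :
    (∀ x ∈ (fun t => 2 * t) '' (h '' J), ∀ y ∈ (fun t => 2 * t) '' (h '' J),
        G (g (hinv (x / 2)) - g (hinv (y / 2))) - G 0 =
          H ((x + y) / 2) - (H x + H y) / 2) ∧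
      ∀ u ∈ J, F u = (G 0 - H (2 * h u)) / 2 := by
  refine ⟨?_, fun u hu => F_eq_of_funEq heq hu⟩
  rintro _ ⟨_, ⟨u, hu, rfl⟩, rfl⟩ _ ⟨_, ⟨v, hv, rfl⟩, rfl⟩
  have halve : ∀ t : ℝ, 2 * t / 2 = t := fun t => by ring
  rw [← mul_add, halve, halve, halve, hinv_left u hu, hinv_left v hv]
  exact G_sub_G_zero_eq_of_funEq heq hu hv

/-- Let `J ⊆ ℝ` be a nonempty open interval, `h : J → ℝ` a continuous
strictly monotone function, and set `I := 2h(J)`, `ℓ(x) := g(h⁻¹(x/2))` for `x ∈ I`, and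
`G₀ := G − G(0)`.  If `(g, h, F, G, H)` solves
`G(g(u)−g(v)) = H(h(u)+h(v)) + F(u) + F(v)` for all `u, v ∈ J`, then
`G₀(ℓ(x)−ℓ(y)) = H((x+y)/2) − (H(x)+H(y))/2` for all `x, y ∈ I`, and moreover
`F(u) = ½(G(0) − H(2h(u)))` for all `u ∈ J`.
(The inverse of `h` is formalized by a function `hinv` that is a left inverse of `h` on `J`.) -/
theorem stmt16 (J : Set ℝ) (hJopen : IsOpen J) (hJconn : J.OrdConnected)
    (hJne : J.Nonempty) (g h F G H : ℝ → ℝ)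
    (hcont : ContinuousOn h J)
    (hmono : StrictMonoOn h J ∨ StrictAntiOn h J)
    (hinv : ℝ → ℝ)
    (hinv_left : ∀ u ∈ J, hinv (h u) = u)
    (heq : ∀ u ∈ J, ∀ v ∈ J, G (g u - g v) = H (h u + h v) + F u + F v) :
    (∀ x ∈ (fun t => 2 * t) '' (h '' J), ∀ y ∈ (fun t => 2 * t) '' (h '' J),
        G (g (hinv (x / 2)) - g (hinv (y / 2))) - G 0 =
          H ((x + y) / 2) - (H x + H y) / 2) ∧
      ∀ u ∈ J, F u = (G 0 - H (2 * h u)) / 2 :=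
  stmt16_general J g h F G H hinv hinv_left heq
end
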